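/- Let q ≥ 4 be a power of 2 and F = 𝔽_q the field with q elements. Let Z denote the additive group of symmetric 3×3 matrices over F, on which SL_3(F) acts by X · C = X C Xᵀ, and let R ≤ Z be the subgroup of symmetric 3×3 matrices over F all of whose diagonal entries are zero. If D is an additive subgroup of Z such that X C Xᵀ ∈ D for every C ∈ D and every X ∈ SL_3(F), and D ≠ 0 and D ≠ Z, then D = R. -/

import Mathlib

open Matrix

/-- The additive group of symmetric `3 × 3` matrices over `F`. -/
def symmMatrices (F : Type*) [Field F] : AddSubgroup (Matrix (Fin 3) (Fin 3) F) where
  carrier := {C | Cᵀ = C}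
  add_mem' := by
    intro a b ha hb
    simp only [Set.mem_setOf_eq, Matrix.transpose_add] at *
    rw [ha, hb]
  zero_mem' := by simp
  neg_mem' := by
    intro a ha
    simp only [Set.mem_setOf_eq, Matrix.transpose_neg] at *
    rw [ha]

/-- The additive group of symmetric `3 × 3` matrices over `F` with zero diagonal. -/
def symmMatricesZeroDiag (F : Type*) [Field F] : AddSubgroup (Matrix (Fin 3) (Fin 3) F) where
  carrier := {C | Cᵀ = C ∧ ∀ i, C i i = 0}
  add_mem' := by
    rintro a b ⟨ha, ha'⟩ ⟨hb, hb'⟩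
    constructor
    · rw [Matrix.transpose_add, ha, hb]
    · intro i
      simp [Matrix.add_apply, ha' i, hb' i]
  zero_mem' := by simp
  neg_mem' := by
    rintro a ⟨ha, ha'⟩
    constructor
    · rw [Matrix.transpose_neg, ha]
    · intro i
      simp [Matrix.neg_apply, ha' i]

/-!
Over `𝔽_q` with `q` even, `2 = 0` and squaring is bijective. For a transvection `T = 1 + t E_ij`
the difference `T C Tᵀ - C = t (E_ij C + C E_ji) + t² C_jj E_ii` lies in `D`. Adding it to its
conjugate by a diagonal matrix of `SL₃` that rescales row `i` uniformly cancels everything except a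
nonzero multiple of `t² C_jj E_ii`; so one element of `D` with a nonzero diagonal entry puts every
`s E_ii` into `D`, then every `s (E_ij + E_ji)`, and `D = Z`. Hence a proper `D` has zero diagonal.
If then `C_ij ≠ 0` and `k` is the third index, the transvection adding `t` times row `i` to row `k`
gives `T C Tᵀ - C = t C_ij (E_kj + E_jk)`, and further transvections carry such a generator to
every off-diagonal position, so `R ≤ D`.
-/

theorem Matrix.IsSymm.exists_add_transpose_add_diagonal_eq {ι α : Type*} [DecidableEq ι]
    [LinearOrder ι] [AddCommMonoid α] {M : Matrix ι ι α} (hM : M.IsSymm) :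
    ∃ U : Matrix ι ι α, U + Uᵀ + diagonal M.diag = M := by
  refine ⟨of fun i j ↦ if i < j then M i j else 0, ?_⟩
  ext i j
  rcases lt_trichotomy i j with h | rfl | h
  · simp [h, h.ne, h.not_gt]
  · simp
  · simp [h, h.ne', h.not_gt, hM.apply]

section

variable {ι F : Type*} [DecidableEq ι] [Field F]

def symmSingle (i j : ι) (s : F) : Matrix ι ι F := single i j s + single j i s

theorem symmSingle_comm (i j : ι) (s : F) : symmSingle i j s = symmSingle j i s :=
  add_comm _ _

theorem symmSingle_isSymm (i j : ι) (s : F) : (symmSingle i j s).IsSymm := by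
  simp [IsSymm, symmSingle, add_comm]

theorem symmSingle_self [CharP F 2] (i : ι) (s : F) : symmSingle i i s = 0 := by
  rw [symmSingle, ← two_smul F, CharTwo.two_eq_zero, zero_smul]

variable [Fintype ι]

theorem add_transpose_mem_of_symmSingle_mem {D : AddSubgroup (Matrix ι ι F)}
    (hD : ∀ i j s, symmSingle i j s ∈ D) (U : Matrix ι ι F) : U + Uᵀ ∈ D := by
  have hU : U + Uᵀ = ∑ i, ∑ j, symmSingle i j (U i j) := by
    conv_lhs => rw [matrix_eq_sum_single U]
    simp [symmSingle, transpose_sum, Finset.sum_add_distrib]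
  rw [hU]
  exact D.sum_mem fun i _ ↦ D.sum_mem fun j _ ↦ hD i j _

theorem diagonal_mem_of_single_mem {D : AddSubgroup (Matrix ι ι F)}
    (hD : ∀ i s, single i i s ∈ D) (d : ι → F) : diagonal d ∈ D := by
  rw [← sum_single_eq_diagonal]
  exact D.sum_mem fun i _ ↦ hD i _

theorem det_diagonal_update_inv_pow {w : F} (hw : w ≠ 0) (i : ι) :
    (diagonal (Function.update (fun _ ↦ w) i (w⁻¹ ^ (Fintype.card ι - 1)))).det = 1 := by
  rw [det_diagonal, Finset.prod_update_of_mem (Finset.mem_univ i), Finset.prod_const,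
    Finset.card_sdiff, Finset.card_univ]
  simp [inv_pow, hw]

def transvectionCongrDiff (i j : ι) (t : F) (C : Matrix ι ι F) : Matrix ι ι F :=
  single i j t * C + C * single j i t + single i i (t * C j j * t)

theorem transvection_mul_mul_transpose_sub (i j : ι) (t : F) (C : Matrix ι ι F) :
    transvection i j t * C * (transvection i j t)ᵀ - C = transvectionCongrDiff i j t C := by
  simp only [transvection, transvectionCongrDiff, transpose_add, transpose_one, transpose_single,
    add_mul, mul_add, one_mul, mul_one, single_mul_mul_single]
  abel

theorem transvectionCongrDiff_single_self (i j : ι) (t : F) :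
    transvectionCongrDiff i j t (single j j 1) = symmSingle i j t + single i i (t * t) := by
  simp [transvectionCongrDiff, symmSingle]

section CharTwo

variable [CharP F 2]

theorem diagonal_mul_transvectionCongrDiff_mul_transpose_add {C : Matrix ι ι F} (hC : C.IsSymm)
    {i : ι} (j : ι) {d : ι → F} {w : F} (hd : ∀ k, k ≠ i → d k = w) (t : F) :
    diagonal d * transvectionCongrDiff i j t C * (diagonal d)ᵀ
        + transvectionCongrDiff i j (d i * w * t) C =
      single i i ((d i * (1 + w)) ^ 2 * t ^ 2 * C j j) := by
  have hji : C j i = C i j := hC.apply i j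
  ext k l
  simp only [transvectionCongrDiff, diagonal_transpose, diagonal_mul, mul_diagonal,
    Matrix.add_apply]
  by_cases hk : k = i <;> by_cases hl : l = i
  · subst hk hl
    simp [hji]
    ring_nf
    simp [CharTwo.two_eq_zero]
  · subst hk
    simp [hl, hd l hl, Ne.symm hl]
    ring_nf
    simp [CharTwo.two_eq_zero]
  · subst hl
    simp [hk, hd k hk, Ne.symm hk]
    ring_nf
    simp [CharTwo.two_eq_zero]
  · simp [hk, hl, Ne.symm hk]

theorem transvectionCongrDiff_eq_symmSingle {C : Matrix ι ι F} (hC : C.IsSymm) {i j k : ι}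
    (hij : i ≠ j) (hik : i ≠ k) (hjk : j ≠ k) (hrow : ∀ l, l ≠ j → l ≠ k → C i l = 0) (t : F) :
    transvectionCongrDiff k i t C = symmSingle k j (t * C i j) := by
  have hii : C i i = 0 := hrow i hij hik
  ext a b
  simp only [transvectionCongrDiff, symmSingle, Matrix.add_apply, hii]
  by_cases ha : a = k <;> by_cases hb : b = k
  · subst ha hb
    simp [hC.apply, hjk]
    ring_nf
    simp [CharTwo.two_eq_zero]
  · subst ha
    by_cases hbj : b = j
    · subst hbj; simp [hb, Ne.symm hb]
    · simp [hb, Ne.symm hb, Ne.symm hbj, hrow b hbj hb]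
  · subst hb
    by_cases haj : a = j
    · subst haj; simp [ha, hC.apply, mul_comm]
    · simp [ha, Ne.symm ha, Ne.symm haj, hC.apply, hrow a haj ha]
  · simp [ha, hb, Ne.symm ha, Ne.symm hb]

end CharTwo

def IsCongrInvariant (D : AddSubgroup (Matrix ι ι F)) : Prop :=
  ∀ C ∈ D, ∀ X : SpecialLinearGroup ι F, (X : Matrix ι ι F) * C * (X : Matrix ι ι F)ᵀ ∈ D

namespace IsCongrInvariant

variable {D : AddSubgroup (Matrix ι ι F)}

theorem conj_mem (hD : IsCongrInvariant D) {C X : Matrix ι ι F} (hC : C ∈ D) (hX : X.det = 1) :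
    X * C * Xᵀ ∈ D :=
  hD C hC ⟨X, hX⟩

theorem transvectionCongrDiff_mem (hD : IsCongrInvariant D) {C : Matrix ι ι F} (hC : C ∈ D)
    {i j : ι} (hij : i ≠ j) (t : F) : transvectionCongrDiff i j t C ∈ D := by
  rw [← transvection_mul_mul_transpose_sub]
  exact D.sub_mem (hD.conj_mem hC (det_transvection_of_ne _ _ hij t)) hC

theorem symmSingle_mem_of_single_mem (hD : IsCongrInvariant D) {i j : ι} (hij : i ≠ j)
    (hj : single j j 1 ∈ D) (hi : ∀ s, single i i s ∈ D) (s : F) : symmSingle i j s ∈ D := by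
  have h := D.sub_mem (hD.transvectionCongrDiff_mem hj hij s) (hi (s * s))
  rwa [transvectionCongrDiff_single_self, add_sub_cancel_right] at h

variable [CharP F 2]

theorem single_mem_of_apply_ne_zero [PerfectRing F 2] (hD : IsCongrInvariant D)
    (hDZ : ∀ C ∈ D, C.IsSymm) {w : F} (hw0 : w ≠ 0) (hw1 : w ≠ 1) {C : Matrix ι ι F}
    (hC : C ∈ D) {i j : ι} (hij : i ≠ j) (hCjj : C j j ≠ 0) (s : F) : single i i s ∈ D := by
  -- `diagonal d` has determinant one and rescales every off-diagonal entry of row `i` by the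
  -- same factor `d i * w`, so it only spoils the `(i, i)` entry.
  set d : ι → F := Function.update (fun _ ↦ w) i (w⁻¹ ^ (Fintype.card ι - 1))
  have hd : ∀ k, k ≠ i → d k = w := fun k hk ↦ Function.update_of_ne hk _ _
  have hκ : (d i * (1 + w)) ^ 2 * C j j ≠ 0 := by
    have h1w : 1 + w ≠ 0 := fun h ↦
      hw1 (by linear_combination h - CharTwo.two_eq_zero (R := F))
    simp [d, hw0, h1w, hCjj]
  obtain ⟨t, ht⟩ := surjective_frobenius F 2 (s / ((d i * (1 + w)) ^ 2 * C j j))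
  have hs : (d i * (1 + w)) ^ 2 * t ^ 2 * C j j = s := by
    rw [mul_right_comm, ← frobenius_def (p := 2) t, ht, mul_div_cancel₀ _ hκ]
  have key := D.add_mem
    (hD.conj_mem (hD.transvectionCongrDiff_mem hC hij t) (det_diagonal_update_inv_pow hw0 i))
    (hD.transvectionCongrDiff_mem hC hij (d i * w * t))
  rwa [diagonal_mul_transvectionCongrDiff_mul_transpose_add (hDZ C hC) j hd, hs] at key

theorem single_mem_of_apply_self_ne_zero [Nontrivial ι] [PerfectRing F 2]
    (hD : IsCongrInvariant D) (hDZ : ∀ C ∈ D, C.IsSymm) {w : F} (hw0 : w ≠ 0) (hw1 : w ≠ 1)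
    {C : Matrix ι ι F} (hC : C ∈ D) {j : ι} (hCjj : C j j ≠ 0) (k : ι) (s : F) :
    single k k s ∈ D := by
  by_cases hkj : k = j
  · obtain ⟨i, hik⟩ := exists_ne k
    have hi := hD.single_mem_of_apply_ne_zero hDZ hw0 hw1 hC (hkj ▸ hik) hCjj 1
    exact hD.single_mem_of_apply_ne_zero hDZ hw0 hw1 hi (Ne.symm hik) (by simp) s
  · exact hD.single_mem_of_apply_ne_zero hDZ hw0 hw1 hC hkj hCjj s

theorem symmSingle_mem_of_row_eq_zero (hD : IsCongrInvariant D) {C : Matrix ι ι F} (hC : C ∈ D)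
    (hCs : C.IsSymm) {i j k : ι} (hij : i ≠ j) (hik : i ≠ k) (hjk : j ≠ k)
    (hrow : ∀ l, l ≠ j → l ≠ k → C i l = 0) (hCij : C i j ≠ 0) (s : F) :
    symmSingle k j s ∈ D := by
  have h := hD.transvectionCongrDiff_mem hC (Ne.symm hik) (s / C i j)
  rwa [transvectionCongrDiff_eq_symmSingle hCs hij hik hjk hrow, div_mul_cancel₀ _ hCij] at h

theorem symmSingle_mem_of_symmSingle_mem (hD : IsCongrInvariant D) {x y : ι} (hxy : x ≠ y)
    (h : ∀ s, symmSingle x y s ∈ D) (a b : ι) (s : F) : symmSingle a b s ∈ D := by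
  have spread : ∀ {u v l : ι}, u ≠ v → l ≠ u → l ≠ v → symmSingle u v 1 ∈ D →
      ∀ s, symmSingle l v s ∈ D := fun huv hlu hlv huvD ↦
    hD.symmSingle_mem_of_row_eq_zero huvD (symmSingle_isSymm _ _ _) huv (Ne.symm hlu)
      (Ne.symm hlv) (fun m hmv _ ↦ by simp [symmSingle, Ne.symm huv, Ne.symm hmv])
      (by simp [symmSingle, huv])
  have hy : ∀ a s, symmSingle a y s ∈ D := by
    intro a s
    by_cases hax : a = x
    · exact hax ▸ h s
    by_cases hay : a = y
    · rw [hay, symmSingle_self]; exact D.zero_mem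
    exact spread hxy hax hay (h 1) s
  by_cases hby : b = y
  · exact hby ▸ hy a s
  by_cases hay : a = y
  · rw [hay, symmSingle_comm]; exact hy b s
  by_cases hab : a = b
  · rw [hab, symmSingle_self]; exact D.zero_mem
  rw [symmSingle_comm]
  exact spread (Ne.symm hay) hby (Ne.symm hab) (symmSingle_comm a y (1 : F) ▸ hy a 1) s

theorem isSymm_mem_of_apply_self_ne_zero [LinearOrder ι] [Nontrivial ι] [PerfectRing F 2]
    (hD : IsCongrInvariant D) (hDZ : ∀ C ∈ D, C.IsSymm) {w : F} (hw0 : w ≠ 0) (hw1 : w ≠ 1)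
    {C : Matrix ι ι F} (hC : C ∈ D) {j : ι} (hCjj : C j j ≠ 0) {M : Matrix ι ι F}
    (hM : M.IsSymm) : M ∈ D := by
  have hdiag := hD.single_mem_of_apply_self_ne_zero hDZ hw0 hw1 hC hCjj
  obtain ⟨i, hij⟩ := exists_ne j
  have hoff := hD.symmSingle_mem_of_symmSingle_mem hij
    (hD.symmSingle_mem_of_single_mem hij (hdiag j 1) (hdiag i))
  obtain ⟨U, hU⟩ := hM.exists_add_transpose_add_diagonal_eq
  rw [← hU]
  exact D.add_mem (add_transpose_mem_of_symmSingle_mem hoff U)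
    (diagonal_mem_of_single_mem hdiag _)

end IsCongrInvariant

theorem Fin.exists_ne_ne_forall_eq_or_eq_or_eq :
    ∀ i j : Fin 3, i ≠ j → ∃ k, i ≠ k ∧ j ≠ k ∧ ∀ l, l = i ∨ l = j ∨ l = k := by
  decide

theorem IsCongrInvariant.symmMatricesZeroDiag_le [CharP F 2]
    {D : AddSubgroup (Matrix (Fin 3) (Fin 3) F)} (hD : IsCongrInvariant D)
    (hDZ : D ≤ symmMatrices F) (hdiag : ∀ C ∈ D, ∀ i, C i i = 0) (hne0 : D ≠ ⊥) :
    symmMatricesZeroDiag F ≤ D := by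
  obtain ⟨⟨C, hC⟩, hC0⟩ := (AddSubgroup.ne_bot_iff_exists_ne_zero).1 hne0
  obtain ⟨i, j, hCij⟩ : ∃ i j, C i j ≠ 0 := by
    by_contra! h
    exact hC0 (Subtype.ext (Matrix.ext h))
  have hij : i ≠ j := by
    rintro rfl
    exact hCij (hdiag C hC i)
  obtain ⟨k, hik, hjk, hk⟩ := Fin.exists_ne_ne_forall_eq_or_eq_or_eq i j hij
  have hrow : ∀ l, l ≠ j → l ≠ k → C i l = 0 := fun l hlj hlk ↦ by
    obtain rfl : l = i := (hk l).resolve_right (by tauto)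
    exact hdiag C hC l
  have hoff := hD.symmSingle_mem_of_symmSingle_mem (Ne.symm hjk)
    (hD.symmSingle_mem_of_row_eq_zero hC (hDZ hC) hij hik hjk hrow hCij)
  rintro M ⟨hMs, hMd⟩
  obtain ⟨U, hU⟩ := IsSymm.exists_add_transpose_add_diagonal_eq hMs
  have hMdiag : diagonal M.diag = 0 := diagonal_eq_zero.2 (funext hMd)
  rw [← hU, hMdiag, add_zero]
  exact add_transpose_mem_of_symmSingle_mem hoff U

theorem charP_two_of_card_eq_two_pow [Fintype F] {b : ℕ} (h : Fintype.card F = 2 ^ b) :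
    CharP F 2 := by
  have h2b : (2 : F) ^ b = 0 := by exact_mod_cast h ▸ FiniteField.cast_card_eq_zero F
  exact CharTwo.of_one_ne_zero_of_two_eq_zero one_ne_zero (eq_zero_of_pow_eq_zero h2b)

theorem exists_ne_zero_ne_one_of_two_lt_card [Fintype F] (h : 2 < Fintype.card F) :
    ∃ w : F, w ≠ 0 ∧ w ≠ 1 := by
  classical
  obtain ⟨w, -, hw⟩ := Finset.exists_mem_notMem_of_card_lt_card (s := {(0 : F), 1})
    (t := Finset.univ) (Finset.card_le_two.trans_lt (h.trans_eq Finset.card_univ.symm))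
  exact ⟨w, by simpa using hw⟩

end

/-- a nonzero proper `SL₃(F)`-invariant additive subgroup of the group of
symmetric `3 × 3` matrices over `F = 𝔽_q` (`q ≥ 4` even) must be the subgroup of symmetric
matrices with zero diagonal. -/
theorem stmt_13 (q b : ℕ) (hq2 : q = 2 ^ b) (hq4 : 4 ≤ q)
    (F : Type*) [Field F] [Fintype F] (hcard : Fintype.card F = q)
    (D : AddSubgroup (Matrix (Fin 3) (Fin 3) F)) (hDZ : D ≤ symmMatrices F)
    (hinv : ∀ C ∈ D, ∀ X : Matrix.SpecialLinearGroup (Fin 3) F,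
      (X : Matrix (Fin 3) (Fin 3) F) * C * (X : Matrix (Fin 3) (Fin 3) F)ᵀ ∈ D)
    (hne0 : D ≠ ⊥) (hneZ : D ≠ symmMatrices F) :
    D = symmMatricesZeroDiag F := by
  have hD : IsCongrInvariant D := hinv
  have : CharP F 2 := charP_two_of_card_eq_two_pow (hcard.trans hq2)
  obtain ⟨w, hw0, hw1⟩ := exists_ne_zero_ne_one_of_two_lt_card (F := F) (by omega)
  have hdiag : ∀ C ∈ D, ∀ i, C i i = 0 := fun C hC i ↦ by
    by_contra hCi
    exact hneZ (le_antisymm hDZ fun M hM ↦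
      hD.isSymm_mem_of_apply_self_ne_zero (fun _ h ↦ hDZ h) hw0 hw1 hC hCi hM)
  exact le_antisymm (fun C hC ↦ ⟨hDZ hC, hdiag C hC⟩)
    (hD.symmMatricesZeroDiag_le hDZ hdiag hne0)
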